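/- arXiv:1810.09728 — 3 statements merged into one kernel-verified Lean document; each statement's English description precedes it below -/
import Mathlib

section
/- For any simple graph G and any vertex v of G, the tree cover number satisfies T(G) - 1 ≤ T(G - v) ≤ T(G) + deg(v) - 1. -/
/-!
Adding the block `{v}` to a tree cover of `G - v` gives a tree cover of `G`. Conversely, let `s`
be the block containing `v` of a minimum tree cover of `G`. The connected components of
`s \ {v}` induce trees, and each contains a neighbour of `v` because the tree on `s` is
connected; replacing `s` by these at most `deg v` components gives a tree cover of `G - v`.
-/

open SimpleGraph

/-- A tree cover of `G`: vertex-disjoint induced subtrees covering all vertices. -/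
def IsTreeCover {V : Type} (G : SimpleGraph V) (C : Finset (Set V)) : Prop :=
  (∀ s ∈ C, (G.induce s).IsTree) ∧ (∀ v : V, ∃ s ∈ C, v ∈ s) ∧
    (C : Set (Set V)).PairwiseDisjoint id

/-- The tree cover number: minimum cardinality of a tree cover. -/
noncomputable def treeCoverNumber {V : Type} (G : SimpleGraph V) : ℕ :=
  sInf {n | ∃ C : Finset (Set V), IsTreeCover G C ∧ C.card = n}

namespace SimpleGraph

variable {V : Type} {G : SimpleGraph V}

variable (G) in
noncomputable def induceInduceIso (s : Set V) (t : Set s) :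
    (G.induce s).induce t ≃g G.induce (Subtype.val '' t) where
  toEquiv := Equiv.Set.image Subtype.val t Subtype.val_injective
  map_rel_iff' := Iff.rfl

lemma isTree_induce_image_supp {t : Set V} (ht : (G.induce t).IsAcyclic)
    (c : (G.induce t).ConnectedComponent) : (G.induce (Subtype.val '' c.supp)).IsTree :=
  (induceInduceIso G t c.supp).isTree_iff.1 ⟨c.connected_toSimpleGraph, ht.induce c.supp⟩

lemma exists_adj_reachable_induce_diff_singleton {s : Set V} {v : V} {a e : s}
    (p : (G.induce s).Walk a e) (he : (e : V) = v) (ha : (a : V) ≠ v) :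
    ∃ w, ∃ hw : w ∈ s \ {v}, G.Adj w v ∧
      (G.induce (s \ {v})).Reachable ⟨a, a.2, ha⟩ ⟨w, hw⟩ := by
  induction p with
  | nil => exact (ha he).elim
  | @cons a b _ hab q ih =>
    by_cases hb : (b : V) = v
    · exact ⟨a, ⟨a.2, ha⟩, hb ▸ hab, .rfl⟩
    · obtain ⟨w, hw, hwv, hbw⟩ := ih he hb
      have hab' : (G.induce (s \ {v})).Adj ⟨a, a.2, ha⟩ ⟨b, b.2, hb⟩ := hab
      exact ⟨w, hw, hwv, hab'.reachable.trans hbw⟩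

lemma card_connectedComponent_induce_diff_singleton_le_degree {s : Set V} {v : V}
    [Fintype (G.neighborSet v)] (hs : (G.induce s).Preconnected) (hv : v ∈ s) :
    Nat.card (G.induce (s \ {v})).ConnectedComponent ≤ G.degree v := by
  let f : ↥(G.neighborSet v ∩ s) → (G.induce (s \ {v})).ConnectedComponent :=
    fun w => (G.induce (s \ {v})).connectedComponentMk ⟨w, w.2.2, fun h => w.2.1.ne' h⟩
  have hf : Function.Surjective f := by
    refine ConnectedComponent.ind fun a => ?_
    obtain ⟨p⟩ := hs ⟨a, a.2.1⟩ ⟨v, hv⟩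
    obtain ⟨w, hw, hwv, haw⟩ := exists_adj_reachable_induce_diff_singleton p rfl a.2.2
    exact ⟨⟨w, hwv.symm, hw.1⟩, ConnectedComponent.sound haw.symm⟩
  calc Nat.card (G.induce (s \ {v})).ConnectedComponent
      ≤ Nat.card ↥(G.neighborSet v ∩ s) := Nat.card_le_card_of_surjective f hf
    _ ≤ Nat.card (G.neighborSet v) := Nat.card_mono (Set.toFinite _) Set.inter_subset_left
    _ = G.degree v := by rw [Nat.card_eq_fintype_card, card_neighborSet_eq_degree]

end SimpleGraph

variable {V : Type} {G : SimpleGraph V}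

/-- A tree cover of `G.induce S`, written with vertex sets of `G`. -/
def IsTreePartition (G : SimpleGraph V) (S : Set V) (D : Finset (Set V)) : Prop :=
  (∀ u ∈ D, u ⊆ S ∧ (G.induce u).IsTree) ∧ (∀ x ∈ S, ∃ u ∈ D, x ∈ u) ∧
    (D : Set (Set V)).PairwiseDisjoint id

lemma isTreePartition_univ_iff {D : Finset (Set V)} :
    IsTreePartition G Set.univ D ↔ IsTreeCover G D := by
  simp [IsTreePartition, IsTreeCover]

lemma treeCoverNumber_le {C : Finset (Set V)} (h : IsTreeCover G C) :
    treeCoverNumber G ≤ C.card :=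
  Nat.sInf_le ⟨C, h, rfl⟩

lemma exists_isTreeCover_card_eq [Finite V] (G : SimpleGraph V) :
    ∃ C, IsTreeCover G C ∧ C.card = treeCoverNumber G := by
  classical
  have := Fintype.ofFinite V
  suffices hne : {n | ∃ C : Finset (Set V), IsTreeCover G C ∧ C.card = n}.Nonempty from
    Nat.sInf_mem hne
  refine ⟨_, Finset.univ.image fun x : V => ({x} : Set V), ⟨?_, ?_, ?_⟩, rfl⟩
  · simp only [Finset.mem_image]
    rintro _ ⟨x, -, rfl⟩
    exact .of_subsingleton
  · exact fun x => ⟨{x}, Finset.mem_image_of_mem _ (Finset.mem_univ x), rfl⟩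
  · rw [Finset.coe_image]
    rintro _ ⟨x, -, rfl⟩ _ ⟨y, -, rfl⟩ hxy
    exact Set.disjoint_singleton.2 (ne_of_apply_ne _ hxy)

lemma IsTreeCover.isTreePartition_image_val {S : Set V} {C : Finset (Set S)}
    [DecidableEq (Set V)] (h : IsTreeCover (G.induce S) C) :
    IsTreePartition G S (C.image (Subtype.val '' ·)) := by
  refine ⟨?_, fun x hx => ?_, ?_⟩
  · simp only [Finset.mem_image]
    rintro _ ⟨t, ht, rfl⟩
    exact ⟨Subtype.coe_image_subset S t, (induceInduceIso G S t).isTree_iff.1 (h.1 t ht)⟩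
  · obtain ⟨t, ht, hxt⟩ := h.2.1 ⟨x, hx⟩
    exact ⟨_, Finset.mem_image_of_mem _ ht, ⟨_, hxt, rfl⟩⟩
  · rw [Finset.coe_image]
    rintro _ ⟨a, ha, rfl⟩ _ ⟨b, hb, rfl⟩ hab
    exact (Set.disjoint_image_iff Subtype.val_injective).2 (h.2.2 ha hb (ne_of_apply_ne _ hab))

lemma IsTreePartition.isTreeCover_image_preimage_val {S : Set V} {D : Finset (Set V)}
    [DecidableEq (Set S)] (h : IsTreePartition G S D) :
    IsTreeCover (G.induce S) (D.image (Subtype.val ⁻¹' ·)) := by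
  refine ⟨?_, fun x => ?_, ?_⟩
  · simp only [Finset.mem_image]
    rintro _ ⟨u, hu, rfl⟩
    refine (induceInduceIso G S _).isTree_iff.2 ?_
    rw [Subtype.image_preimage_coe, Set.inter_eq_right.2 (h.1 u hu).1]
    exact (h.1 u hu).2
  · obtain ⟨u, hu, hxu⟩ := h.2.1 x x.2
    exact ⟨_, Finset.mem_image_of_mem _ hu, hxu⟩
  · rw [Finset.coe_image]
    rintro _ ⟨a, ha, rfl⟩ _ ⟨b, hb, rfl⟩ hab
    exact (h.2.2 ha hb (ne_of_apply_ne _ hab)).preimage _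

lemma treeCoverNumber_induce_le {S : Set V} {D : Finset (Set V)} (h : IsTreePartition G S D) :
    treeCoverNumber (G.induce S) ≤ D.card := by
  classical
  exact (treeCoverNumber_le h.isTreeCover_image_preimage_val).trans Finset.card_image_le

lemma exists_isTreePartition_card_eq [Finite V] (G : SimpleGraph V) (S : Set V) :
    ∃ D, IsTreePartition G S D ∧ D.card = treeCoverNumber (G.induce S) := by
  classical
  obtain ⟨C, hC, hcard⟩ := exists_isTreeCover_card_eq (G.induce S)
  refine ⟨_, hC.isTreePartition_image_val, ?_⟩
  rw [Finset.card_image_of_injective _ (Set.image_injective.2 Subtype.val_injective), hcard]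

lemma IsTreePartition.insert [DecidableEq (Set V)] {S : Set V} {D : Finset (Set V)} {x : V}
    (h : IsTreePartition G S D) (hx : x ∉ S) :
    IsTreePartition G (insert x S) (insert {x} D) := by
  refine ⟨?_, ?_, ?_⟩
  · simp only [Finset.mem_insert]
    rintro u (rfl | hu)
    · exact ⟨Set.singleton_subset_iff.2 (Set.mem_insert x S), .of_subsingleton⟩
    · exact ⟨(h.1 u hu).1.trans (Set.subset_insert x S), (h.1 u hu).2⟩
  · rintro y (rfl | hy)
    · exact ⟨{y}, Finset.mem_insert_self _ _, rfl⟩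
    · obtain ⟨u, hu, hyu⟩ := h.2.1 y hy
      exact ⟨u, Finset.mem_insert_of_mem hu, hyu⟩
  · rw [Finset.coe_insert]
    exact h.2.2.insert fun u hu _ => Set.disjoint_singleton_left.2 fun hxu => hx ((h.1 u hu).1 hxu)

lemma IsTreePartition.replace [DecidableEq (Set V)] {S s : Set V} {D E : Finset (Set V)} {v : V}
    (h : IsTreePartition G S D) (hs : s ∈ D) (hv : v ∈ s) (hE : IsTreePartition G (s \ {v}) E) :
    IsTreePartition G (S \ {v}) (D.erase s ∪ E) := by
  have hdisj : ∀ u ∈ D.erase s, Disjoint u s := fun u hu =>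
    h.2.2 (Finset.mem_of_mem_erase hu) hs (Finset.ne_of_mem_erase hu)
  have hEsub : ∀ u ∈ E, u ⊆ S \ {v} := fun u hu =>
    (hE.1 u hu).1.trans (Set.sdiff_subset_sdiff_left (h.1 s hs).1)
  refine ⟨?_, ?_, ?_⟩
  · simp only [Finset.mem_union]
    rintro u (hu | hu)
    · refine ⟨fun x hx => ⟨(h.1 u (Finset.mem_of_mem_erase hu)).1 hx, ?_⟩,
        (h.1 u (Finset.mem_of_mem_erase hu)).2⟩
      rintro rfl
      exact Set.disjoint_left.1 (hdisj u hu) hx hv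
    · exact ⟨hEsub u hu, (hE.1 u hu).2⟩
  · rintro x ⟨hxS, hxv⟩
    obtain ⟨u, hu, hxu⟩ := h.2.1 x hxS
    by_cases hus : u = s
    · obtain ⟨w, hw, hxw⟩ := hE.2.1 x ⟨hus ▸ hxu, hxv⟩
      exact ⟨w, Finset.mem_union_right _ hw, hxw⟩
    · exact ⟨u, Finset.mem_union_left _ (Finset.mem_erase.2 ⟨hus, hu⟩), hxu⟩
  · rw [Finset.coe_union, Set.pairwiseDisjoint_union]
    refine ⟨h.2.2.subset (Finset.coe_subset.2 (Finset.erase_subset s D)), hE.2.2,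
      fun u hu w hw _ => (hdisj u hu).mono_right ((hE.1 w hw).1.trans Set.sdiff_subset)⟩

lemma exists_isTreePartition_card_le_connectedComponent [Finite V] {t : Set V}
    (ht : (G.induce t).IsAcyclic) :
    ∃ E, IsTreePartition G t E ∧ E.card ≤ Nat.card (G.induce t).ConnectedComponent := by
  classical
  have := Fintype.ofFinite (G.induce t).ConnectedComponent
  refine ⟨Finset.univ.image fun c : (G.induce t).ConnectedComponent => Subtype.val '' c.supp,
    ⟨?_, fun x hx => ?_, ?_⟩, ?_⟩
  · simp only [Finset.mem_image]
    rintro _ ⟨c, -, rfl⟩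
    exact ⟨Subtype.coe_image_subset t _, isTree_induce_image_supp ht c⟩
  · exact ⟨_, Finset.mem_image_of_mem _ (Finset.mem_univ _), ⟨x, hx⟩, rfl, rfl⟩
  · rw [Finset.coe_image]
    rintro _ ⟨c, -, rfl⟩ _ ⟨d, -, rfl⟩ hcd
    exact (Set.disjoint_image_iff Subtype.val_injective).2
      (pairwise_disjoint_supp_connectedComponent _ (by rintro rfl; exact hcd rfl))
  · rw [Nat.card_eq_fintype_card]
    exact Finset.card_image_le.trans (Finset.card_univ).le

lemma treeCoverNumber_le_treeCoverNumber_induce_compl_add_one [Finite V] (G : SimpleGraph V)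
    (v : V) : treeCoverNumber G ≤ treeCoverNumber (G.induce ({v}ᶜ : Set V)) + 1 := by
  classical
  obtain ⟨D, hD, hcard⟩ := exists_isTreePartition_card_eq G {v}ᶜ
  have hcover := hD.insert (Set.notMem_compl_iff.2 rfl)
  rw [Set.insert_eq, Set.union_compl_self, isTreePartition_univ_iff] at hcover
  calc treeCoverNumber G ≤ (insert {v} D).card := treeCoverNumber_le hcover
    _ ≤ D.card + 1 := Finset.card_insert_le _ _
    _ = _ := by rw [hcard]

lemma treeCoverNumber_induce_compl_add_one_le [Finite V] (G : SimpleGraph V) (v : V)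
    [Fintype (G.neighborSet v)] :
    treeCoverNumber (G.induce ({v}ᶜ : Set V)) + 1 ≤ treeCoverNumber G + G.degree v := by
  classical
  obtain ⟨C, hC, hcard⟩ := exists_isTreeCover_card_eq G
  obtain ⟨s, hsC, hvs⟩ := hC.2.1 v
  have hs := hC.1 s hsC
  obtain ⟨E, hE, hEcard⟩ := exists_isTreePartition_card_le_connectedComponent
    (hs.isAcyclic.embedding (G.induceHomOfLE Set.sdiff_subset))
  have hD := (isTreePartition_univ_iff.2 hC).replace hsC hvs hE
  rw [← Set.compl_eq_univ_sdiff] at hD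
  have hcomp :=
    card_connectedComponent_induce_diff_singleton_le_degree hs.connected.preconnected hvs
  have hD_card := treeCoverNumber_induce_le hD
  have hunion := Finset.card_union_le (C.erase s) E
  have herase := Finset.card_erase_of_mem hsC
  have hC_pos := Finset.card_pos.2 ⟨s, hsC⟩
  omega

theorem stmt_0 {V : Type} [Fintype V] (G : SimpleGraph V) [DecidableRel G.Adj] (v : V) :
    treeCoverNumber G - 1 ≤ treeCoverNumber (G.induce ({v}ᶜ : Set V)) ∧
      treeCoverNumber (G.induce ({v}ᶜ : Set V)) ≤ treeCoverNumber G + G.degree v - 1 := by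
  have hlower := treeCoverNumber_le_treeCoverNumber_induce_compl_add_one G v
  have hupper := treeCoverNumber_induce_compl_add_one_le G v
  omega
end

section
/- Every connected simple graph G on n ≥ 3 vertices contains an induced subgraph H isomorphic to a star K_{1,p} for some p ≥ 1 such that G - V(H) is connected. -/
open SimpleGraph

set_option linter.unusedSectionVars false
set_option maxHeartbeats 1000000

section Helpers

variable {V : Type}


lemma reach_mono (G : SimpleGraph V) {A B : Set V} (h : A ⊆ B) {u v : V} (hu : u ∈ A) (hv : v ∈ A)
    (hr : (G.induce A).Reachable ⟨u, hu⟩ ⟨v, hv⟩) :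
    (G.induce B).Reachable ⟨u, h hu⟩ ⟨v, h hv⟩ :=
  hr.map (G.induceHomOfLE h).toHom

lemma connected_of_reach (G : SimpleGraph V) {A : Set V} {r : V} (hr : r ∈ A)
    (h : ∀ v (hv : v ∈ A), (G.induce A).Reachable ⟨v, hv⟩ ⟨r, hr⟩) : (G.induce A).Connected := by
  rw [connected_iff]
  exact ⟨fun x y => (h x x.2).trans (h y y.2).symm, ⟨⟨r, hr⟩⟩⟩

lemma walk_avoid (G : SimpleGraph V) {s C : Set V} {r : V} (hr : r ∈ s) (hrC : r ∉ C)
    (hsep : ∀ u ∈ C, ∀ v ∈ s, v ∉ C → v ≠ r → ¬ G.Adj u v) :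
    ∀ {x y : ↥s} (_ : (G.induce s).Walk x y), ↑y = r → ∀ hx : ↑x ∉ C,
      (G.induce (s \ C)).Reachable ⟨↑x, ⟨x.2, hx⟩⟩ ⟨r, ⟨hr, hrC⟩⟩ := by
  intro x y w
  induction w with
  | nil =>
    intro hy hx
    subst hy
    exact Reachable.refl _
  | @cons a z y h p ih =>
    intro hy hx
    by_cases hz : ↑z ∈ C
    · by_cases hxr : (a : V) = r
      · subst hxr
        exact Reachable.refl _
      · exact absurd h.symm (hsep ↑z hz ↑a a.2 hx hxr)
    · have hadj : (G.induce (s \ C)).Adj ⟨↑a, ⟨a.2, hx⟩⟩ ⟨↑z, ⟨z.2, hz⟩⟩ := h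
      exact hadj.reachable.trans (ih hy hz)

lemma walk_comp (G : SimpleGraph V) {s' : Set V} {w₀ : V} (hw₀ : w₀ ∈ s')
    {C : Set V} (hCdef : C = {v | ∃ hv : v ∈ s', (G.induce s').Reachable ⟨v, hv⟩ ⟨w₀, hw₀⟩})
    (hw₀C : w₀ ∈ C) :
    ∀ {x y : ↥s'} (_ : (G.induce s').Walk x y), ↑y = w₀ → ∀ hx : ↑x ∈ C,
      (G.induce C).Reachable ⟨↑x, hx⟩ ⟨w₀, hw₀C⟩ := by
  intro x y w
  induction w with
  | nil =>
    intro hy hx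
    subst hy
    exact Reachable.refl _
  | @cons a z y h p ih =>
    intro hy hx
    have hzC : ↑z ∈ C := by
      rw [hCdef]
      exact ⟨z.2, (p.copy rfl (Subtype.ext hy)).reachable⟩
    have hadj : (G.induce C).Adj ⟨↑a, hx⟩ ⟨↑z, hzC⟩ := h
    exact hadj.reachable.trans (ih hy hzC)

lemma walk_nbr' (G : SimpleGraph V) {s C : Set V} {r : V} (hrC : r ∉ C)
    (hclosed : ∀ u ∈ C, ∀ v ∈ s, v ≠ r → G.Adj u v → v ∈ C) :
    ∀ {x y : ↥s} (_ : (G.induce s).Walk x y), ↑y = r → ↑x ∈ C → ∃ r₁ ∈ C, G.Adj r r₁ := by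
  intro x y w
  induction w with
  | nil =>
    intro hy hx
    rw [hy] at hx
    exact absurd hx hrC
  | @cons a z y h p ih =>
    intro hy hx
    by_cases hz : (z : V) = r
    · have : G.Adj ↑a ↑z := h
      rw [hz] at this
      exact ⟨↑a, hx, this.symm⟩
    · exact ih hy (hclosed ↑a hx ↑z z.2 hz h)

lemma claim [Fintype V] (G : SimpleGraph V) (s : Finset V) :
    ∀ r ∈ s, (G.induce ↑s).Connected →
    (∃ c : V, ∃ L : Finset V, c ∈ s ∧ ↑L ⊆ (s : Set V) ∧ (L.Nonempty ∧ c ∉ L ∧ (∀ ℓ ∈ L, G.Adj c ℓ) ∧ ∀ x ∈ L, ∀ y ∈ L, ¬ G.Adj x y) ∧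
      r ∉ insert c (↑L : Set V) ∧
      (G.induce ((↑s : Set V) \ insert c ↑L)).Connected)
    ∨ ((∀ v ∈ s, v ≠ r → G.Adj r v) ∧ ∀ u ∈ s, ∀ v ∈ s, u ≠ r → v ≠ r → ¬ G.Adj u v) := by
  classical
  induction s using Finset.strongInduction with
  | _ s ih =>
  intro r hrs hconn
  by_cases hedge : ∃ w₀ ∈ s, ∃ u ∈ s, w₀ ≠ r ∧ u ≠ r ∧ G.Adj w₀ u
  · obtain ⟨w₀, hw₀s, u, hus, hw₀r, hur, hadj⟩ := hedge
    left
    set s' : Set V := (↑s : Set V) \ {r} with hs'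
    have hw₀' : w₀ ∈ s' := ⟨hw₀s, hw₀r⟩
    have hu' : u ∈ s' := ⟨hus, hur⟩
    set C : Set V := {v | ∃ hv : v ∈ s', (G.induce s').Reachable ⟨v, hv⟩ ⟨w₀, hw₀'⟩} with hCdef
    have hCs' : C ⊆ s' := fun v hv => hv.1
    have hCs : C ⊆ (↑s : Set V) := fun v hv => (hCs' hv).1
    have hw₀C : w₀ ∈ C := ⟨hw₀', Reachable.refl _⟩
    have hrC : r ∉ C := fun h => (hCs' h).2 rfl
    have hclosed : ∀ a ∈ C, ∀ v ∈ (↑s : Set V), v ≠ r → G.Adj a v → v ∈ C := by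
      rintro a ⟨has', hreach⟩ v hvs hvr hadj2
      have hvs' : v ∈ s' := ⟨hvs, hvr⟩
      have hA : (G.induce s').Adj ⟨v, hvs'⟩ ⟨a, has'⟩ := hadj2.symm
      exact ⟨hvs', hA.reachable.trans hreach⟩
    have hsep : ∀ a ∈ C, ∀ v ∈ (↑s : Set V), v ∉ C → v ≠ r → ¬ G.Adj a v :=
      fun a haC v hvs hvC hvr had => hvC (hclosed a haC v hvs hvr had)
    have huC : u ∈ C := hclosed w₀ hw₀C u hus hur hadj
    set CF : Finset V := s.filter (· ∈ C) with hCF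
    have hCFC : (↑CF : Set V) = C := by
      ext v
      simp only [hCF, Finset.coe_filter, Set.mem_setOf_eq, Finset.mem_coe]
      exact ⟨fun h => h.2, fun h => ⟨hCs h, h⟩⟩
    have hCFss : CF ⊂ s := by
      refine ⟨Finset.filter_subset _ _, fun hsub => ?_⟩
      have : r ∈ CF := hsub hrs
      rw [← Finset.mem_coe, hCFC] at this
      exact hrC this
    obtain ⟨wk⟩ := hconn ⟨w₀, hw₀s⟩ ⟨r, hrs⟩
    obtain ⟨r₁, hr₁C, hadjr₁⟩ :=
      walk_nbr' G hrC (fun a ha v hv => hclosed a ha v hv) wk rfl hw₀C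
    have hr₁s : r₁ ∈ (↑s : Set V) := hCs hr₁C
    have hCconn : (G.induce C).Connected := by
      apply connected_of_reach G hw₀C
      intro v hv
      obtain ⟨hv', hreach⟩ := id hv
      obtain ⟨wk2⟩ := hreach
      exact walk_comp G hw₀' hCdef hw₀C wk2 rfl hv
    have hr₁CF : r₁ ∈ CF := by rw [← Finset.mem_coe, hCFC]; exact hr₁C
    have hCFconn : (G.induce (↑CF : Set V)).Connected := by rw [hCFC]; exact hCconn
    rcases ih CF hCFss r₁ hr₁CF hCFconn with
      ⟨c, L, hcCF, hLCF, hstar, hr₁not, hDconn⟩ | ⟨hadjall, hnoedge⟩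
    · -- star inside C
      have hcC : c ∈ C := by rw [← hCFC]; exact Finset.mem_coe.mpr hcCF
      have hLC : (↑L : Set V) ⊆ C := by rw [← hCFC]; exact hLCF
      have hinsC : insert c (↑L : Set V) ⊆ C := Set.insert_subset hcC hLC
      have hrins : r ∉ insert c (↑L : Set V) := fun h => hrC (hinsC h)
      have hr₁D : r₁ ∈ (↑s : Set V) \ insert c ↑L := ⟨hr₁s, hr₁not⟩
      rw [hCFC] at hDconn
      refine ⟨c, L, Finset.mem_coe.mp (hCs hcC), hLC.trans hCs, hstar, hrins, ?_⟩
      apply connected_of_reach G (⟨hrs, hrins⟩ : r ∈ (↑s : Set V) \ insert c ↑L)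
      intro v hv
      by_cases hvr : v = r
      · subst hvr; exact Reachable.refl _
      by_cases hvC : v ∈ C
      · have h1 : (G.induce (C \ insert c ↑L)).Reachable ⟨v, ⟨hvC, hv.2⟩⟩
            ⟨r₁, ⟨hr₁C, hr₁D.2⟩⟩ := hDconn ⟨v, ⟨hvC, hv.2⟩⟩ ⟨r₁, ⟨hr₁C, hr₁D.2⟩⟩
        have hsub : C \ insert c ↑L ⊆ (↑s : Set V) \ insert c ↑L :=
          Set.diff_subset_diff_left hCs
        have h2 := reach_mono G hsub _ _ h1
        refine h2.trans ?_
        have hA : (G.induce ((↑s : Set V) \ insert c ↑L)).Adj ⟨r₁, hr₁D⟩ ⟨r, ⟨hrs, hrins⟩⟩ :=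
          hadjr₁.symm
        exact hA.reachable
      · obtain ⟨wk3⟩ := hconn ⟨v, hv.1⟩ ⟨r, hrs⟩
        have h1 := walk_avoid G hrs hrC hsep wk3 rfl hvC
        have hsub : (↑s : Set V) \ C ⊆ (↑s : Set V) \ insert c ↑L :=
          Set.diff_subset_diff_right hinsC
        exact reach_mono G hsub _ _ h1
    · -- C itself is a star centered r₁
      have hins : insert r₁ (↑(CF.erase r₁) : Set V) = C := by
        rw [← Finset.coe_insert, Finset.insert_erase hr₁CF, hCFC]
      have hLne : (CF.erase r₁).Nonempty := by
        rcases eq_or_ne u r₁ with h | h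
        · refine ⟨w₀, Finset.mem_erase.mpr ⟨?_, ?_⟩⟩
          · rintro rfl; exact hadj.ne h.symm
          · rw [← Finset.mem_coe, hCFC]; exact hw₀C
        · exact ⟨u, Finset.mem_erase.mpr ⟨h, by rw [← Finset.mem_coe, hCFC]; exact huC⟩⟩
      refine ⟨r₁, CF.erase r₁, Finset.mem_coe.mp hr₁s, ?_, ?_, ?_, ?_⟩
      · intro x hx
        have hxC : x ∈ C := by
          rw [← hCFC]
          exact Finset.mem_coe.mpr (Finset.erase_subset _ _ (by exact_mod_cast hx))
        exact hCs hxC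
      · refine ⟨hLne, Finset.notMem_erase _ _, ?_, ?_⟩
        · intro ℓ hℓ
          exact hadjall ℓ (Finset.mem_of_mem_erase hℓ) (Finset.ne_of_mem_erase hℓ)
        · intro x hx y hy
          exact hnoedge x (Finset.mem_of_mem_erase hx) y (Finset.mem_of_mem_erase hy)
            (Finset.ne_of_mem_erase hx) (Finset.ne_of_mem_erase hy)
      · rw [hins]; exact hrC
      · rw [hins]
        apply connected_of_reach G (⟨hrs, hrC⟩ : r ∈ (↑s : Set V) \ C)
        intro v hv
        by_cases hvr : v = r
        · subst hvr; exact Reachable.refl _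
        · obtain ⟨wk3⟩ := hconn ⟨v, hv.1⟩ ⟨r, hrs⟩
          exact walk_avoid G hrs hrC hsep wk3 rfl hv.2
  · right
    constructor
    · intro v hvs hvr
      obtain ⟨w⟩ := hconn ⟨v, hvs⟩ ⟨r, hrs⟩
      cases w with
      | nil => exact absurd rfl hvr
      | cons h p =>
        rename_i z
        have hadj : G.Adj v ↑z := h
        by_cases hz : (z : V) = r
        · rw [hz] at hadj; exact hadj.symm
        · exact absurd ⟨v, hvs, ↑z, z.2, hvr, hz, hadj⟩ hedge
    · intro a has b hbs har hbr hab
      exact hedge ⟨a, has, b, hbs, har, hbr, hab⟩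


lemma star_iso (G : SimpleGraph V) (c : V) (L : Finset V) (hc : c ∉ L)
    (hadj : ∀ ℓ ∈ L, G.Adj c ℓ) (hind : ∀ x ∈ L, ∀ y ∈ L, ¬ G.Adj x y) :
    Nonempty (G.induce (insert c (↑L : Set V)) ≃g completeBipartiteGraph (Fin 1) (Fin L.card)) := by
  classical
  have fL : ↥(↑L : Set V) ≃ Fin L.card := Fintype.equivFinOfCardEq (by simp)
  have hmemL : ∀ i : Fin L.card, (fL.symm i : V) ∈ L := fun i => by
    have := (fL.symm i).2
    simpa using this
  refine ⟨?_⟩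
  refine RelIso.symm ⟨?_, ?_⟩
  · refine
      { toFun := fun a => match a with
          | Sum.inl _ => ⟨c, Set.mem_insert _ _⟩
          | Sum.inr i => ⟨(fL.symm i : V), Set.mem_insert_of_mem _ (fL.symm i).2⟩
        invFun := fun x => if h : (x : V) = c then Sum.inl 0 else
          Sum.inr (fL ⟨(x : V), by
            rcases x.2 with h' | h'
            · exact absurd h' h
            · exact h'⟩)
        left_inv := ?_
        right_inv := ?_ }
    · rintro (i | i)
      · simp [Fin.eq_zero i]
      · have hne : ((fL.symm i : V)) ≠ c := fun h => hc (h ▸ hmemL i)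
        simp only [hne, dif_neg, not_false_iff]
        congr 1
        convert fL.apply_symm_apply i
    · rintro ⟨x, hx⟩
      by_cases h : x = c
      · subst h; simp
      · simp only [h, dif_neg, not_false_iff]
        congr 1
        exact congrArg Subtype.val (fL.symm_apply_apply _)
  · rintro (i | i) (j | j) <;>
      simp only [Equiv.coe_fn_mk, completeBipartiteGraph_adj, comap_adj, Function.Embedding.coe_subtype,
        Sum.isLeft_inl, Sum.isRight_inr, Sum.isRight_inl, Sum.isLeft_inr] <;>
      constructor <;> intro h
    · exact absurd h (G.irrefl)
    · simp at h
    · simp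
    · exact hadj _ (hmemL j)
    · simp
    · exact (hadj _ (hmemL i)).symm
    · exact absurd h (hind _ (hmemL i) _ (hmemL j))
    · simp at h

end Helpers

theorem stmt_1 {V : Type} [Fintype V] (G : SimpleGraph V) (hG : G.Connected)
    (hn : 3 ≤ Fintype.card V) :
    ∃ (s : Set V) (p : ℕ), 1 ≤ p ∧
      Nonempty (G.induce s ≃g completeBipartiteGraph (Fin 1) (Fin p)) ∧
      (G.induce (sᶜ : Set V)).Connected := by
  classical
  have hne : Nonempty V := Fintype.card_pos_iff.mp (by omega)
  obtain ⟨r⟩ := hne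
  have huniv : ((Finset.univ : Finset V) : Set V) = Set.univ := Finset.coe_univ
  have hconnU : (G.induce ((Finset.univ : Finset V) : Set V)).Connected := by
    rw [huniv]
    exact (induceUnivIso G).connected_iff.mpr hG
  rcases claim G Finset.univ r (Finset.mem_univ r) hconnU with
    ⟨c, L, _, _, ⟨hLne, hcL, hadj, hind⟩, _, hconnD⟩ | ⟨hadjall, hnoedge⟩
  · refine ⟨insert c (↑L : Set V), L.card, Finset.card_pos.mpr hLne, star_iso G c L hcL hadj hind, ?_⟩
    rw [huniv] at hconnD
    rw [Set.compl_eq_univ_diff]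
    exact hconnD
  · -- G is a star centered at r
    have h2 : 1 < (Finset.univ.erase r).card := by
      rw [Finset.card_erase_of_mem (Finset.mem_univ r)]
      have : Fintype.card V = Finset.univ.card := rfl
      omega
    obtain ⟨x, hx, y, hy, hxy⟩ := Finset.one_lt_card.mp h2
    have hxr : x ≠ r := Finset.ne_of_mem_erase hx
    have hyr : y ≠ r := Finset.ne_of_mem_erase hy
    set L : Finset V := (Finset.univ.erase r).erase x with hL
    have hyL : y ∈ L := Finset.mem_erase.mpr ⟨hxy.symm, hy⟩
    have hrL : r ∉ L := fun h => (Finset.ne_of_mem_erase (Finset.mem_of_mem_erase h)) rfl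
    have hadjL : ∀ ℓ ∈ L, G.Adj r ℓ := fun ℓ hℓ =>
      hadjall ℓ (Finset.mem_univ ℓ) (Finset.ne_of_mem_erase (Finset.mem_of_mem_erase hℓ))
    have hindL : ∀ a ∈ L, ∀ b ∈ L, ¬ G.Adj a b := fun a ha b hb =>
      hnoedge a (Finset.mem_univ a) b (Finset.mem_univ b)
        (Finset.ne_of_mem_erase (Finset.mem_of_mem_erase ha))
        (Finset.ne_of_mem_erase (Finset.mem_of_mem_erase hb))
    refine ⟨insert r (↑L : Set V), L.card, Finset.card_pos.mpr ⟨y, hyL⟩,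
      star_iso G r L hrL hadjL hindL, ?_⟩
    have hcompl : (insert r (↑L : Set V))ᶜ = {x} := by
      ext v
      simp only [Set.mem_compl_iff, Set.mem_insert_iff, Finset.mem_coe, hL,
        Finset.mem_erase, Finset.mem_univ, and_true, Set.mem_singleton_iff]
      constructor
      · intro h
        push_neg at h
        obtain ⟨h1, h2⟩ := h
        by_contra hvx
        exact h1 (h2 hvx)
      · rintro rfl
        push_neg
        exact ⟨hxr, fun h => absurd rfl h⟩
    rw [hcompl]
    apply connected_of_reach G (Set.mem_singleton x)
    intro v hv
    have : v = x := hv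
    subst this
    exact Reachable.refl _
end

section
/- For any connected simple graph G on n ≥ 2 vertices, the tree cover number satisfies T(G) ≤ ⌈n/2⌉. -/
open SimpleGraph

/-!
Induct on the number of vertices. In a connected graph fix a root `r` and let `D` be the largest
distance from `r`. If two vertices at distance `D` are adjacent they span an induced edge;
otherwise a neighbour `u` of a farthest vertex, at distance `D - 1`, together with all its
neighbours at distance `D` spans an induced star. In both cases the tree has at least two
vertices and contains every vertex that lies one step further from `r` than one of its own
vertices, so each remaining vertex keeps a neighbour closer to `r` outside the tree and the rest
of the graph stays connected. Peeling off such trees leaves at most one tree of size one.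
-/

namespace SimpleGraph

variable {V : Type} {G : SimpleGraph V}

lemma isTree_induce_insert {u : V} {L : Set V} (hL : G.IsIndepSet L)
    (hadj : ∀ z ∈ L, G.Adj u z) : (G.induce (insert u L)).IsTree := by
  let c : ↥(insert u L : Set V) := ⟨u, Set.mem_insert u L⟩
  have hmem : ∀ w : ↥(insert u L : Set V), w ≠ c → w.1 ∈ L := fun w hw =>
    w.2.resolve_left fun h => hw (Subtype.ext h)
  refine ⟨.of_isUniversal (v := c) fun w hw => hadj w (hmem w hw.symm), ?_⟩
  refine (isAcyclic_starGraph c).anti fun a b hab => starGraph_adj.mpr ⟨hab.ne, ?_⟩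
  by_contra! h
  exact hL (hmem a h.1) (hmem b h.2) (fun e => hab.ne (Subtype.ext e)) hab

lemma isTree_induce_image_val {R : Set V} {t : Set R} (h : ((G.induce R).induce t).IsTree) :
    (G.induce (Subtype.val '' t)).IsTree :=
  (Iso.isTree_iff
    { toEquiv := Equiv.Set.image Subtype.val t Subtype.val_injective, map_rel_iff' := Iff.rfl }).mp h

lemma induce_preconnected_of_exists_adj_lt {R : Set V} (f : V → ℕ) (r : V)
    (h : ∀ z ∈ R, z ≠ r → ∃ w ∈ R, G.Adj z w ∧ f w < f z) : (G.induce R).Preconnected := by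
  -- `r ∈ R` is not assumed: descending from any vertex of `R` must end at `r`.
  have key : ∀ z (hz : z ∈ R), ∃ hr : r ∈ R, (G.induce R).Reachable ⟨z, hz⟩ ⟨r, hr⟩ := by
    intro z
    induction hfz : f z using Nat.strong_induction_on generalizing z with
    | _ n ih =>
      intro hz
      by_cases hzr : z = r
      · subst hzr
        exact ⟨hz, .rfl⟩
      obtain ⟨w, hw, hzw, hlt⟩ := h z hz hzr
      obtain ⟨hr, hwr⟩ := ih (f w) (hfz ▸ hlt) w rfl hw
      exact ⟨hr, (show (G.induce R).Adj ⟨z, hz⟩ ⟨w, hw⟩ from hzw).reachable.trans hwr⟩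
  exact fun a b => (key a a.2).2.trans (key b b.2).2.symm

lemma Connected.exists_adj_dist_add_one (hG : G.Connected) {r z : V} (hz : z ≠ r) :
    ∃ w, G.Adj z w ∧ G.dist r w + 1 = G.dist r z := by
  obtain ⟨p, hp⟩ := hG.exists_walk_length_eq_dist z r
  have hnil : ¬ p.Nil := Walk.not_nil_of_ne hz
  refine ⟨p.snd, p.adj_snd hnil, ?_⟩
  have h1 : G.dist p.snd r ≤ p.tail.length := dist_le _
  have h2 := p.length_tail_add_one hnil
  have h3 : G.dist z r ≤ G.dist z p.snd + G.dist p.snd r := hG.dist_triangle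
  have h4 : G.dist z p.snd = 1 := dist_eq_one_iff_adj.mpr (p.adj_snd hnil)
  rw [dist_comm (u := r), dist_comm (u := r)]
  omega

lemma Connected.induce_compl_preconnected (hG : G.Connected) (r : V) {S : Set V}
    (hS : ∀ w ∈ S, ∀ z, G.Adj w z → G.dist r z = G.dist r w + 1 → z ∈ S) :
    (G.induce Sᶜ).Preconnected := by
  refine induce_preconnected_of_exists_adj_lt (G.dist r) r fun z hz hzr => ?_
  obtain ⟨w, hzw, hd⟩ := hG.exists_adj_dist_add_one hzr
  exact ⟨w, fun hw => hz (hS w hw z hzw.symm hd.symm), hzw, by omega⟩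

lemma Connected.induce_compl_insert_preconnected (hG : G.Connected) {r u : V} {L : Set V} {D : ℕ}
    (hmax : ∀ y, G.dist r y ≤ D) (hLD : ∀ z ∈ L, G.dist r z = D)
    (hu : ∀ z, G.Adj u z → G.dist r z = G.dist r u + 1 → z ∈ L) :
    (G.induce (insert u L)ᶜ).Preconnected := by
  refine hG.induce_compl_preconnected r fun w hw z hwz hz => ?_
  rcases hw with rfl | hw
  · exact Set.mem_insert_of_mem _ (hu z hwz hz)
  · have := hmax z
    have := hLD w hw
    omega

lemma two_le_ncard_insert [Finite V] {u : V} {L : Set V} (hL : L.Nonempty)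
    (hadj : ∀ z ∈ L, G.Adj u z) : 2 ≤ (insert u L).ncard := by
  rw [Set.ncard_insert_of_notMem fun hu => G.irrefl (hadj u hu)]
  have := hL.ncard_pos
  omega

lemma Connected.exists_isTree_induce_preconnected_compl_of_nontrivial [Finite V] [Nontrivial V]
    (hG : G.Connected) :
    ∃ S : Set V, (G.induce S).IsTree ∧ (G.induce Sᶜ).Preconnected ∧ 2 ≤ S.ncard := by
  obtain ⟨r⟩ := hG.nonempty
  obtain ⟨x, hmax⟩ := Finite.exists_max (G.dist r)
  have hxr : x ≠ r := by
    obtain ⟨y, hyr⟩ := exists_ne r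
    have hy := hmax y
    have := hG.pos_dist_of_ne hyr.symm
    rintro rfl
    rw [dist_self] at hy
    omega
  obtain ⟨u, hxu, hu⟩ := hG.exists_adj_dist_add_one hxr
  by_cases hedge : ∃ a b, G.Adj a b ∧ G.dist r a = G.dist r x ∧ G.dist r b = G.dist r x
  · obtain ⟨a, b, hab, ha, hb⟩ := hedge
    have hadj : ∀ z ∈ ({b} : Set V), G.Adj a z := by simpa using hab
    refine ⟨insert a {b}, isTree_induce_insert (Set.pairwise_singleton _ _) hadj,
      hG.induce_compl_insert_preconnected hmax (by simpa using hb) fun z _ hz => ?_,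
      two_le_ncard_insert (Set.singleton_nonempty b) hadj⟩
    have := hmax z
    omega
  · set L := {z | G.Adj u z ∧ G.dist r z = G.dist r x}
    have hL : G.IsIndepSet L := fun a ha b hb _ hab => hedge ⟨a, b, hab, ha.2, hb.2⟩
    have hadj : ∀ z ∈ L, G.Adj u z := fun z hz => hz.1
    refine ⟨insert u L, isTree_induce_insert hL hadj,
      hG.induce_compl_insert_preconnected hmax (fun z hz => hz.2) fun z huz hz => ⟨huz, by omega⟩,
      two_le_ncard_insert ⟨x, hxu.symm, rfl⟩ hadj⟩

lemma Connected.exists_isTree_induce_preconnected_compl [Finite V] (hG : G.Connected) :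
    ∃ S : Set V, (G.induce S).IsTree ∧ (G.induce Sᶜ).Preconnected ∧ (Sᶜ = ∅ ∨ 2 ≤ S.ncard) := by
  rcases subsingleton_or_nontrivial V with hV | hV
  · refine ⟨Set.univ, (induceUnivIso G).isTree_iff.mpr ⟨hG, .of_subsingleton⟩,
      fun a => absurd trivial a.2, .inl Set.compl_univ⟩
  · obtain ⟨S, hS, hSc, hcard⟩ := hG.exists_isTree_induce_preconnected_compl_of_nontrivial
    exact ⟨S, hS, hSc, .inr hcard⟩

end SimpleGraph

lemma IsTreeCover.insert_image_val {V : Type} {G : SimpleGraph V} {S : Set V}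
    {C : Finset (Set ↥Sᶜ)} (hC : IsTreeCover (G.induce Sᶜ) C) (hS : (G.induce S).IsTree) :
    IsTreeCover G (insert S (C.image (Set.image Subtype.val))) := by
  obtain ⟨htree, hcover, hdisj⟩ := hC
  refine ⟨?_, fun v => ?_, ?_⟩
  · simp only [Finset.mem_insert, Finset.mem_image]
    rintro s (rfl | ⟨t, ht, rfl⟩)
    exacts [hS, isTree_induce_image_val (htree t ht)]
  · by_cases hv : v ∈ S
    · exact ⟨S, Finset.mem_insert_self _ _, hv⟩
    obtain ⟨t, ht, hvt⟩ := hcover ⟨v, hv⟩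
    exact ⟨_, Finset.mem_insert_of_mem (Finset.mem_image_of_mem _ ht), ⟨_, hvt, rfl⟩⟩
  · rw [Finset.coe_insert, Set.pairwiseDisjoint_insert, Finset.coe_image]
    refine ⟨?_, ?_⟩
    · rintro _ ⟨t, ht, rfl⟩ _ ⟨t', ht', rfl⟩ hne
      exact (Set.disjoint_image_iff Subtype.val_injective).mpr
        (hdisj ht ht' fun h => hne (h ▸ rfl))
    · rintro _ ⟨t, -, rfl⟩ -
      exact disjoint_compl_right.mono_right (Subtype.coe_image_subset _ t)

theorem SimpleGraph.Preconnected.exists_isTreeCover {V : Type} [Finite V] {G : SimpleGraph V}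
    (hG : G.Preconnected) : ∃ C, IsTreeCover G C ∧ 2 * C.card ≤ Nat.card V + 1 := by
  induction hn : Nat.card V using Nat.strong_induction_on generalizing V with
  | _ n ih =>
    rcases isEmpty_or_nonempty V with hV | hV
    · exact ⟨∅, ⟨by simp, isEmptyElim, by simp⟩, by simp⟩
    obtain ⟨S, hS, hSc, hsize⟩ := (Connected.mk hG).exists_isTree_induce_preconnected_compl
    have hsum := Set.ncard_add_ncard_compl S
    have hpos : 0 < S.ncard := Set.nonempty_coe_sort.mp hS.connected.nonempty |>.ncard_pos
    have hsize' : Sᶜ.ncard = 0 ∨ 2 ≤ S.ncard := hsize.imp_left fun h => by simp [h]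
    obtain ⟨C, hC, hCcard⟩ := ih Sᶜ.ncard (by omega) hSc rfl
    refine ⟨_, hC.insert_image_val hS, ?_⟩
    have := Finset.card_insert_le S (C.image (Set.image Subtype.val))
    have := C.card_image_le (f := Set.image Subtype.val)
    omega

theorem stmt_2_general {V : Type} [Fintype V] (G : SimpleGraph V) (hG : G.Connected) :
    treeCoverNumber G ≤ (Fintype.card V + 1) / 2 := by
  obtain ⟨C, hC, hcard⟩ := hG.preconnected.exists_isTreeCover
  have : treeCoverNumber G ≤ C.card := Nat.sInf_le ⟨C, hC, rfl⟩
  rw [Nat.card_eq_fintype_card] at hcard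
  omega

theorem stmt_2 {V : Type} [Fintype V] (G : SimpleGraph V) (hG : G.Connected)
    (hn : 2 ≤ Fintype.card V) :
    treeCoverNumber G ≤ (Fintype.card V + 1) / 2 :=
  stmt_2_general G hG
end
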